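/- arXiv:1703.08291 — 6 statements merged into one kernel-verified Lean document; each statement's English description precedes it below -/
import Mathlib

section
/- Let S be a partial r-spread in PG(v−1, F_q) with hole set H, and let C_H be a linear code whose generator matrix has as columns representatives of the points in H. Then every codeword of C_H has weight divisible by q^(r−1). -/
open Matrix Finset Module

open scoped Classical in
lemma aux_count {F M : Type*} [Field F] [Fintype F] [AddCommGroup M] [Module F M]
    [Fintype M] [FiniteDimensional F M] (W : Submodule F M) (φ : M →ₗ[F] F)
    (s : Finset M) (hs : ∀ y, y ∈ s ↔ (y ∈ W ∧ φ y ≠ 0)) :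
    s.card = 0 ∨
    s.card = (Fintype.card F - 1) * Fintype.card F ^ (Module.finrank F W - 1) := by
  have hs' : s = Finset.univ.filter fun y : M => y ∈ W ∧ φ y ≠ 0 := by
    ext y
    simp [hs y]
  rw [hs']
  by_cases h : ∀ y ∈ W, φ y = 0
  · left
    rw [Finset.card_eq_zero, Finset.filter_eq_empty_iff]
    rintro y - ⟨hyW, hyφ⟩
    exact hyφ (h y hyW)
  · right
    push_neg at h
    obtain ⟨y0, hy0W, hy0φ⟩ := h
    set q := Fintype.card F with hq
    set n := Module.finrank F W with hn
    set ψ := φ.comp W.subtype with hψ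
    have hrange : LinearMap.range ψ = ⊤ := by
      rw [eq_top_iff]
      rintro a -
      exact ⟨(a * (φ y0)⁻¹) • ⟨y0, hy0W⟩, by
        simp [ψ, smul_eq_mul, mul_assoc, inv_mul_cancel₀ hy0φ]⟩
    have hrn := LinearMap.finrank_range_add_finrank_ker ψ
    rw [hrange, finrank_top, Module.finrank_self] at hrn
    have hker : Module.finrank F (LinearMap.ker ψ) = n - 1 := by omega
    have hinf : W ⊓ LinearMap.ker φ = Submodule.map W.subtype (LinearMap.ker ψ) := by
      rw [hψ, LinearMap.ker_comp, Submodule.map_comap_subtype, inf_comm]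
    have hinfrank : Module.finrank F ↥(W ⊓ LinearMap.ker φ) = n - 1 := by
      rw [hinf, Submodule.finrank_map_subtype_eq, hker]
    have hcardW : (Finset.univ.filter fun y : M => y ∈ W).card = q ^ n := by
      rw [← Fintype.card_subtype, card_eq_pow_finrank (K := F)]
    have hcardK : (Finset.univ.filter fun y : M => y ∈ W ∧ φ y = 0).card = q ^ (n - 1) := by
      have : (Finset.univ.filter fun y : M => y ∈ W ∧ φ y = 0)
          = Finset.univ.filter fun y : M => y ∈ W ⊓ LinearMap.ker φ := by
        ext y
        simp [Submodule.mem_inf, LinearMap.mem_ker]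
      rw [this, ← Fintype.card_subtype, card_eq_pow_finrank (K := F), hinfrank]
    have hsplit := Finset.card_filter_add_card_filter_not
      (s := Finset.univ.filter fun y : M => y ∈ W) (p := fun y => φ y = 0)
    rw [Finset.filter_filter, Finset.filter_filter] at hsplit
    rw [hcardW, hcardK] at hsplit
    have hq2 : 2 ≤ q := Fintype.one_lt_card
    have hn1 : 1 ≤ n := by omega
    have hpow : q ^ n = q ^ (n - 1) * q := by
      rw [← pow_succ]
      congr 1
      omega
    have : (Finset.univ.filter fun y : M => y ∈ W ∧ ¬ φ y = 0).card
        = q ^ n - q ^ (n - 1) := by omega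
    rw [this, hpow, Nat.sub_mul, one_mul, mul_comm]

open scoped Classical in
/-- The code associated with the hole set of a partial r-spread in PG(v−1, F_q)
is q^(r−1)-divisible. -/
theorem hole_code_divisible {F : Type*} [Field F] [Fintype F] [DecidableEq F]
    {v r : ℕ} (hr : 2 ≤ r) (hv : r ≤ v)
    (S : Finset (Submodule F (Fin v → F)))
    (hdim : ∀ W ∈ S, Module.finrank F W = r)
    (hdisj : ∀ W1 ∈ S, ∀ W2 ∈ S, W1 ≠ W2 → W1 ⊓ W2 = ⊥)
    {ι : Type*} [Fintype ι] (G : Matrix (Fin v) ι F)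
    (hcols : ∀ j, (fun i => G i j) ≠ 0)
    (hrep : ∀ P : Submodule F (Fin v → F),
      (Module.finrank F P = 1 ∧ ∀ W ∈ S, ¬ P ≤ W) ↔
        ∃ j : ι, P = Submodule.span F {fun i => G i j})
    (hinj : ∀ j1 j2 : ι,
      Submodule.span F {fun i => G i j1} = Submodule.span F {fun i => G i j2} →
        j1 = j2) :
    ∀ x : Fin v → F, Fintype.card F ^ (r - 1) ∣ hammingNorm (x ᵥ* G) := by
  intro x
  by_cases hx : x = 0
  · subst hx
    simp [Matrix.zero_vecMul]
  set q := Fintype.card F with hq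
  have hq2 : 2 ≤ q := Fintype.one_lt_card
  set φ : (Fin v → F) →ₗ[F] F :=
    { toFun := fun y => x ⬝ᵥ y
      map_add' := fun a b => dotProduct_add x a b
      map_smul' := fun c a => by simp [dotProduct, Finset.mul_sum, mul_left_comm] } with hφ
  have hφg : ∀ j, φ (fun i => G i j) = (x ᵥ* G) j := fun j => rfl
  -- total count
  have htot : (Finset.univ.filter fun y : Fin v → F => φ y ≠ 0).card = (q - 1) * q ^ (v - 1) := by
    have h0 := aux_count (⊤ : Submodule F (Fin v → F)) φ
      (Finset.univ.filter fun y : Fin v → F => φ y ≠ 0) (by intro y; simp)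
    have hrk : Module.finrank F (⊤ : Submodule F (Fin v → F)) = v := by
      rw [finrank_top, Module.finrank_fin_fun]
    rw [hrk] at h0
    rcases h0 with h0 | h0
    · exfalso
      obtain ⟨i, hi⟩ := Function.ne_iff.mp hx
      have hne : φ (Pi.single i 1) ≠ 0 := by
        simpa [hφ, dotProduct_single] using hi
      rw [Finset.card_eq_zero, Finset.filter_eq_empty_iff] at h0
      exact h0 (Finset.mem_univ _) hne
    · rw [h0]
  set U : Finset (Fin v → F) := Finset.univ.filter fun y => φ y ≠ 0 with hU
  have hPsplit := Finset.card_filter_add_card_filter_not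
    (s := U) (p := fun y => ∃ W ∈ S, y ∈ W)
  -- covered part
  have hcov : U.filter (fun y => ∃ W ∈ S, y ∈ W)
      = S.biUnion (fun W => Finset.univ.filter fun y => y ∈ W ∧ φ y ≠ 0) := by
    ext y
    simp only [hU, Finset.mem_filter, Finset.mem_biUnion, Finset.mem_univ, true_and]
    tauto
  have hdisj' : ∀ W1 ∈ S, ∀ W2 ∈ S, W1 ≠ W2 →
      Disjoint (Finset.univ.filter fun y => y ∈ W1 ∧ φ y ≠ 0)
        (Finset.univ.filter fun y => y ∈ W2 ∧ φ y ≠ 0) := by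
    intro W1 h1 W2 h2 hne
    rw [Finset.disjoint_left]
    intro y hy1 hy2
    simp only [Finset.mem_filter, Finset.mem_univ, true_and] at hy1 hy2
    have hmem : y ∈ W1 ⊓ W2 := Submodule.mem_inf.mpr ⟨hy1.1, hy2.1⟩
    rw [hdisj W1 h1 W2 h2 hne, Submodule.mem_bot] at hmem
    exact hy1.2 (by rw [hmem, map_zero])
  have hcovcard : (U.filter (fun y => ∃ W ∈ S, y ∈ W)).card
      = ∑ W ∈ S, (Finset.univ.filter fun y => y ∈ W ∧ φ y ≠ 0).card := by
    rw [hcov, Finset.card_biUnion hdisj']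
  set d := (q - 1) * q ^ (r - 1) with hd
  have hdvdcov : d ∣ (U.filter (fun y => ∃ W ∈ S, y ∈ W)).card := by
    rw [hcovcard]
    refine Finset.dvd_sum fun W hW => ?_
    have h0 := aux_count W φ
      (Finset.univ.filter fun y : Fin v → F => y ∈ W ∧ φ y ≠ 0) (by intro y; simp)
    rcases h0 with h0 | h0
    · rw [h0]; exact dvd_zero _
    · rw [h0, hdim W hW]
  -- holes part
  set T : Finset ι := Finset.univ.filter (fun j => (x ᵥ* G) j ≠ 0) with hT
  have hBeq : U.filter (fun y => ¬ ∃ W ∈ S, y ∈ W)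
      = T.biUnion (fun j => (Finset.univ.filter fun c : F => c ≠ 0).image
          (fun c => c • fun i => G i j)) := by
    ext y
    simp only [hU, hT, Finset.mem_filter, Finset.mem_univ, true_and, Finset.mem_biUnion,
      Finset.mem_image]
    constructor
    · rintro ⟨hyφ, hyW⟩
      push_neg at hyW
      have hy0 : y ≠ 0 := fun h => hyφ (by rw [h, map_zero])
      have hP : Module.finrank F (Submodule.span F {y}) = 1 ∧
          ∀ W ∈ S, ¬ Submodule.span F {y} ≤ W :=
        ⟨finrank_span_singleton hy0,
          fun W hW hle => hyW W hW (hle (Submodule.mem_span_singleton_self y))⟩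
      obtain ⟨j, hj⟩ := (hrep _).mp hP
      have hyj : y ∈ Submodule.span F {fun i => G i j} := by
        rw [← hj]; exact Submodule.mem_span_singleton_self y
      obtain ⟨c, hc⟩ := Submodule.mem_span_singleton.mp hyj
      have hc0 : c ≠ 0 := by rintro rfl; rw [zero_smul] at hc; exact hy0 hc.symm
      refine ⟨j, ?_, c, hc0, hc⟩
      intro h
      apply hyφ
      rw [← hc, LinearMap.map_smul, hφg, h, smul_zero]
    · rintro ⟨j, hj, c, hc0, rfl⟩
      constructor
      · rw [LinearMap.map_smul, hφg]
        exact fun h => hj (by simpa [hc0] using h)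
      · rintro ⟨W, hW, hyW⟩
        have hgj : (fun i => G i j) ∈ W := by
          have h2 : c⁻¹ • (c • fun i => G i j) ∈ W := W.smul_mem _ hyW
          rwa [smul_smul, inv_mul_cancel₀ hc0, one_smul] at h2
        have hsp := (hrep (Submodule.span F {fun i => G i j})).mpr ⟨j, rfl⟩
        exact hsp.2 W hW (Submodule.span_le.mpr (by simpa using hgj))
  have himgdisj : ∀ j1 ∈ T, ∀ j2 ∈ T, j1 ≠ j2 →
      Disjoint ((Finset.univ.filter fun c : F => c ≠ 0).image (fun c => c • fun i => G i j1))
        ((Finset.univ.filter fun c : F => c ≠ 0).image (fun c => c • fun i => G i j2)) := by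
    intro j1 _ j2 _ hne
    rw [Finset.disjoint_left]
    rintro z hz1 hz2
    simp only [Finset.mem_image, Finset.mem_filter, Finset.mem_univ, true_and] at hz1 hz2
    obtain ⟨c1, hc1, hzc1⟩ := hz1
    obtain ⟨c2, hc2, hzc2⟩ := hz2
    apply hne
    apply hinj
    rw [← Submodule.span_singleton_smul_eq (IsUnit.mk0 c1 hc1),
      ← Submodule.span_singleton_smul_eq (IsUnit.mk0 c2 hc2) (fun i => G i j2), hzc1, hzc2]
  have himgcard : ∀ j : ι,
      ((Finset.univ.filter fun c : F => c ≠ 0).image (fun c => c • fun i => G i j)).card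
        = q - 1 := by
    intro j
    rw [Finset.card_image_of_injective _ (smul_left_injective F (hcols j)),
      Finset.filter_ne', Finset.card_erase_of_mem (Finset.mem_univ _),
      Finset.card_univ]
  have hBcard : (U.filter (fun y => ¬ ∃ W ∈ S, y ∈ W)).card = (q - 1) * T.card := by
    rw [hBeq, Finset.card_biUnion himgdisj]
    rw [Finset.sum_congr rfl (fun j _ => himgcard j), Finset.sum_const, smul_eq_mul, mul_comm]
  have hwt : hammingNorm (x ᵥ* G) = T.card := by
    unfold hammingNorm
    rw [hT]
  have hdvdtot : d ∣ (q - 1) * q ^ (v - 1) :=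
    mul_dvd_mul_left _ (pow_dvd_pow q (by omega))
  rw [htot] at hPsplit
  have hdvdB : d ∣ (q - 1) * T.card := by
    rw [← hBcard]
    refine (Nat.dvd_add_right hdvdcov).mp ?_
    rw [hPsplit]
    exact hdvdtot
  rw [hwt]
  have := (Nat.mul_dvd_mul_iff_left (show 0 < q - 1 by omega)).mp hdvdB
  exact this
end

section
/- If v ≥ 2r+1 and v ≡ 1 (mod r), then any partial r-spread in PG(v−1, F_q) has size at most (q^v − q)/(q^r − 1) − q + 1 = q^(v−r) + q^(v−2r) + ... + q^(r+1) + 1. -/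
/-!
Count nonzero vectors and call those lying in no member of `S` holes. Since `q^r - 1 ∣ q^v - q`,
a spread exceeding the bound leaves `N = (q - 1) + t (q^r - 1)` holes with `t ≤ q - 2`. A member
of `S` meets a hyperplane `ker φ` in `q^r` or `q^(r-1)` vectors, so the holes off `ker φ` number a
multiple of `(q - 1) q^(r-1)`; as `N ≡ m := (q - 1) + t (q^(r-1) - 1) < (q - 1) q^(r-1)` modulo
that number, every hyperplane contains at least `m` holes. Each hole lies in the kernel of
`q^(v-1)` of the `q^v` functionals, so double counting gives `q m ≤ N`, that is `q - 1 ≤ t`.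
-/

open Finset Module

theorem finrank_inf_ker_add_one {K V : Type*} [Field K] [AddCommGroup V] [Module K V]
    [FiniteDimensional K V] {φ : Dual K V} {W : Submodule K V}
    (hW : ¬W ≤ LinearMap.ker φ) : finrank K ↥(W ⊓ LinearMap.ker φ) + 1 = finrank K W := by
  have hφ : φ ≠ 0 := by rintro rfl; simp at hW
  have hsup : W ⊔ LinearMap.ker φ = ⊤ := codisjoint_iff.mp
    ((LinearMap.isCoatom_ker_of_surjective (LinearMap.surjective hφ)).not_le_iff_codisjoint.mp
      hW).symm
  have hdim := Submodule.finrank_sup_add_finrank_inf_eq W (LinearMap.ker φ)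
  rw [hsup, finrank_top, ← φ.finrank_ker_add_one_of_ne_zero hφ] at hdim
  omega

section HoleSet

open scoped Classical

variable {R M : Type*} [Semiring R] [AddCommMonoid M] [Module R M] [Fintype M]

noncomputable def holeSet (S : Finset (Submodule R M)) : Finset M :=
  {x | x ≠ 0 ∧ ∀ W ∈ S, x ∉ W}

theorem card_filter_holeSet_add_sum {S : Finset (Submodule R M)}
    (hS : ∀ W₁ ∈ S, ∀ W₂ ∈ S, W₁ ≠ W₂ → W₁ ⊓ W₂ = ⊥)
    (p : M → Prop) [DecidablePred p] (hp : ¬p 0) :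
    #{x ∈ holeSet S | p x} + ∑ W ∈ S, #{x | x ∈ W ∧ p x} = #{x | p x} := by
  have hholes : ({x | p x ∧ ¬∃ W ∈ S, x ∈ W} : Finset M) = {x ∈ holeSet S | p x} := by
    ext x
    simp only [holeSet, mem_filter, mem_univ, true_and, not_exists, not_and]
    exact ⟨fun h => ⟨⟨fun h0 => hp (h0 ▸ h.1), h.2⟩, h.1⟩, fun h => ⟨h.2, h.1.2⟩⟩
  have hcover :
      ({x | p x ∧ ∃ W ∈ S, x ∈ W} : Finset M) = S.biUnion fun W => {x | x ∈ W ∧ p x} := by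
    ext x
    simp only [mem_filter, mem_univ, true_and, mem_biUnion]
    tauto
  have hdisj : (S : Set (Submodule R M)).PairwiseDisjoint
      fun W => ({x | x ∈ W ∧ p x} : Finset M) := by
    intro W₁ h₁ W₂ h₂ hne
    rw [Function.onFun]
    refine disjoint_left.mpr fun x hx₁ hx₂ => ?_
    simp only [mem_filter, mem_univ, true_and] at hx₁ hx₂
    have hx : x ∈ W₁ ⊓ W₂ := ⟨hx₁.1, hx₂.1⟩
    rw [hS W₁ h₁ W₂ h₂ hne, Submodule.mem_bot] at hx
    exact hp (hx ▸ hx₁.2)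
  have hsplit := card_filter_add_card_filter_not (s := {x | p x}) fun x => ∃ W ∈ S, x ∈ W
  rwa [filter_filter, filter_filter, hholes, hcover, card_biUnion hdisj, add_comm] at hsplit

end HoleSet

section FiniteField

open scoped Classical

variable {F V : Type*} [Field F] [Fintype F] [AddCommGroup V] [Module F V] [Fintype V]

local notation "q" => Fintype.card F

theorem card_filter_mem_submodule (U : Submodule F V) : #{x | x ∈ U} = q ^ finrank F U := by
  rw [← Fintype.card_subtype]
  exact card_eq_pow_finrank

theorem card_filter_apply_eq_zero {φ : Dual F V} (hφ : φ ≠ 0) :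
    #{x | φ x = 0} = q ^ (finrank F V - 1) := by
  have hker := card_filter_mem_submodule (LinearMap.ker φ)
  simp only [LinearMap.mem_ker] at hker
  rw [hker, ← φ.finrank_ker_add_one_of_ne_zero hφ, Nat.add_sub_cancel]

theorem dvd_card_filter_mem_apply_ne_zero (φ : Dual F V) (W : Submodule F V) :
    (q - 1) * q ^ (finrank F W - 1) ∣ #{x | x ∈ W ∧ φ x ≠ 0} := by
  by_cases hW : W ≤ LinearMap.ker φ
  · rw [card_eq_zero.mpr (filter_eq_empty_iff.mpr fun x _ hx => hx.2 (hW hx.1))]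
    exact dvd_zero _
  · have hsplit := card_filter_add_card_filter_not (s := {x | x ∈ W}) (fun x => φ x = 0)
    have hinf := card_filter_mem_submodule (W ⊓ LinearMap.ker φ)
    have hrank := finrank_inf_ker_add_one hW
    simp only [filter_filter, Submodule.mem_inf, LinearMap.mem_ker] at hsplit hinf
    rw [hinf, card_filter_mem_submodule, ← hrank, pow_succ'] at hsplit
    rw [← hrank, Nat.add_sub_cancel]
    simp only [ne_eq]
    exact ⟨1, by rw [mul_one, Nat.sub_one_mul]; omega⟩

variable {S : Finset (Submodule F V)} {r : ℕ}

theorem card_holeSet_add_card_mul (hS : ∀ W₁ ∈ S, ∀ W₂ ∈ S, W₁ ≠ W₂ → W₁ ⊓ W₂ = ⊥)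
    (hdim : ∀ W ∈ S, finrank F W = r) :
    #(holeSet S) + #S * (q ^ r - 1) = q ^ finrank F V - 1 := by
  have hpart := card_filter_holeSet_add_sum hS (· ≠ 0) (by simp)
  have hW : ∀ W ∈ S, #{x | x ∈ W ∧ x ≠ 0} = q ^ r - 1 := fun W hW => by
    rw [← filter_filter, filter_ne', card_erase_of_mem (by simp), card_filter_mem_submodule,
      hdim W hW]
  rwa [filter_true_of_mem fun x hx => (mem_filter.mp hx).2.1, sum_congr rfl hW, sum_const,
    smul_eq_mul, filter_ne', card_erase_of_mem (mem_univ (0 : V)), card_univ,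
    card_eq_pow_finrank (K := F) (V := V)] at hpart

theorem dvd_card_holeSet_filter_apply_ne_zero
    (hS : ∀ W₁ ∈ S, ∀ W₂ ∈ S, W₁ ≠ W₂ → W₁ ⊓ W₂ = ⊥) (hdim : ∀ W ∈ S, finrank F W = r)
    (hr : r ≤ finrank F V) (φ : Dual F V) :
    (q - 1) * q ^ (r - 1) ∣ #{x ∈ holeSet S | φ x ≠ 0} := by
  have hpart := card_filter_holeSet_add_sum hS (φ · ≠ 0) (by simp)
  have hW : (q - 1) * q ^ (r - 1) ∣ ∑ W ∈ S, #{x | x ∈ W ∧ φ x ≠ 0} :=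
    dvd_sum fun W hW => hdim W hW ▸ dvd_card_filter_mem_apply_ne_zero φ W
  have hV : (q - 1) * q ^ (r - 1) ∣ #{x | φ x ≠ 0} := by
    have := dvd_card_filter_mem_apply_ne_zero φ ⊤
    simp only [Submodule.mem_top, true_and, finrank_top] at this
    exact (Nat.mul_dvd_mul_left _ (Nat.pow_dvd_pow q (by omega))).trans this
  rw [← hpart] at hV
  exact (Nat.dvd_add_left hW).mp hV

theorem le_card_holeSet_filter_apply_eq_zero
    (hS : ∀ W₁ ∈ S, ∀ W₂ ∈ S, W₁ ≠ W₂ → W₁ ⊓ W₂ = ⊥) (hdim : ∀ W ∈ S, finrank F W = r)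
    (hr : r ≤ finrank F V) {m t : ℕ} (hm : m < (q - 1) * q ^ (r - 1))
    (hN : #(holeSet S) = m + t * ((q - 1) * q ^ (r - 1))) (φ : Dual F V) :
    m ≤ #{x ∈ holeSet S | φ x = 0} := by
  obtain ⟨j, hj⟩ := dvd_card_holeSet_filter_apply_ne_zero hS hdim hr φ
  have hsplit := card_filter_add_card_filter_not (s := holeSet S) fun x => φ x = 0
  simp only [← ne_eq] at hsplit
  have hjt : j ≤ t := by
    by_contra! htj
    have := Nat.mul_le_mul_left ((q - 1) * q ^ (r - 1)) htj
    nlinarith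
  nlinarith

theorem pow_finrank_mul_le_card_mul {X : Finset V} (hX : (0 : V) ∉ X) {m : ℕ}
    (hm : ∀ φ : Dual F V, m ≤ #{x ∈ X | φ x = 0}) :
    q ^ finrank F V * m ≤ #X * q ^ (finrank F V - 1) := by
  have : Finite (Dual F V) := Module.finite_of_finite F
  have : Fintype (Dual F V) := Fintype.ofFinite _
  have hcard : Fintype.card (Dual F V) = q ^ finrank F V := by
    rw [card_eq_pow_finrank (K := F), Subspace.dual_finrank_eq]
  have hvanish : ∀ x ∈ X, #{φ : Dual F V | φ x = 0} ≤ q ^ (finrank F V - 1) := fun x hx => by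
    have hx : Dual.eval F V x ≠ 0 :=
      (eval_apply_eq_zero_iff F x).not.mpr (ne_of_mem_of_not_mem hx hX)
    have := card_filter_apply_eq_zero hx
    simp only [Dual.eval_apply, Subspace.dual_finrank_eq] at this
    exact this.le
  have := card_nsmul_le_card_nsmul (R := ℕ) (s := univ) (t := X)
    (fun (φ : Dual F V) x => φ x = 0) (fun φ _ => hm φ) hvanish
  simpa [hcard] using this

-- In projective terms: a hole set of `1 + t (q^r - 1)/(q - 1)` points forces `t ≥ q - 1`.
theorem sub_one_le_of_card_holeSet_eq (hS : ∀ W₁ ∈ S, ∀ W₂ ∈ S, W₁ ≠ W₂ → W₁ ⊓ W₂ = ⊥)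
    (hdim : ∀ W ∈ S, finrank F W = r) (hr : 2 ≤ r) (hrV : r ≤ finrank F V) {t : ℕ}
    (ht : #(holeSet S) = q - 1 + t * (q ^ r - 1)) : q - 1 ≤ t := by
  by_contra! htq
  have hq : 2 ≤ q := Fintype.one_lt_card
  set P := q ^ (r - 1)
  have hP : 2 ≤ P := hq.trans (Nat.le_self_pow (by omega) q)
  have hqP : q ^ r = q * P := by rw [← pow_succ']; congr 1; omega
  set m := q - 1 + t * (P - 1) with hm_def
  have hmZ : (m : ℤ) = q - 1 + t * (P - 1) := by
    rw [hm_def]; push_cast [(by omega : 1 ≤ q), (by omega : 1 ≤ P)]; ring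
  have hm : m < (q - 1) * P := by
    zify [(by omega : 1 ≤ q)] at htq ⊢
    nlinarith
  have hN : #(holeSet S) = m + t * ((q - 1) * P) := by
    rw [ht, hqP]
    zify [(by omega : 1 ≤ q), (by nlinarith : 1 ≤ q * P)]
    linear_combination -hmZ
  have hdc := pow_finrank_mul_le_card_mul (X := holeSet S) (by simp [holeSet])
    (le_card_holeSet_filter_apply_eq_zero hS hdim hrV hm hN)
  rw [← pow_sub_one_mul (by omega : finrank F V ≠ 0), mul_assoc, mul_comm (#(holeSet S))] at hdc
  have hqm : q * m ≤ m + t * ((q - 1) * P) :=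
    hN ▸ Nat.le_of_mul_le_mul_left hdc (by positivity)
  zify [(by omega : 1 ≤ q)] at hqm htq
  nlinarith

theorem card_le_sub_add_one_of_mul_eq (hS : ∀ W₁ ∈ S, ∀ W₂ ∈ S, W₁ ≠ W₂ → W₁ ⊓ W₂ = ⊥)
    (hdim : ∀ W ∈ S, finrank F W = r) (hr : 2 ≤ r) {B : ℕ}
    (hB : q ^ finrank F V - q = (q ^ r - 1) * B) : #S ≤ B - q + 1 := by
  by_contra! hlt
  obtain ⟨W, hW⟩ : S.Nonempty := card_pos.mp (by omega)
  have hrV : r ≤ finrank F V := hdim W hW ▸ Submodule.finrank_le W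
  have hq : 2 ≤ q := Fintype.one_lt_card
  have hqr : q < q ^ r := lt_self_pow₀ hq (by omega)
  have hqV : q ≤ q ^ finrank F V := Nat.le_self_pow (by omega) q
  have hcount := card_holeSet_add_card_mul hS hdim
  zify [hqV, (by omega : 1 ≤ q ^ r), (by omega : 1 ≤ q ^ finrank F V)] at hcount hB
  have hSB : #S ≤ B := by
    by_contra! hBS
    nlinarith
  have hholes : #(holeSet S) = q - 1 + (B - #S) * (q ^ r - 1) := by
    zify [hSB, (by omega : 1 ≤ q), (by omega : 1 ≤ q ^ r)]
    linear_combination hcount + hB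
  have := sub_one_le_of_card_holeSet_eq hS hdim hr hrV hholes
  omega

end FiniteField

theorem Nat.pow_sub_one_dvd_pow_sub_self {r v : ℕ} (q : ℕ) (hmod : v % r = 1) :
    q ^ r - 1 ∣ q ^ v - q := by
  have hv : 1 ≤ v := Nat.pos_of_ne_zero fun hv => by simp [hv] at hmod
  rw [show q ^ v - q = q * (q ^ (v - 1) - 1) by
    rw [Nat.mul_sub_one, ← _root_.pow_succ', Nat.sub_add_cancel hv]]
  exact (Nat.pow_sub_one_dvd_pow_sub_one q (hmod ▸ Nat.dvd_sub_mod v)).mul_left q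

theorem partial_spread_bound_general {F : Type*} [Field F] [Fintype F] {v r : ℕ}
    (hr : 2 ≤ r) (hmod : v % r = 1)
    (S : Finset (Submodule F (Fin v → F)))
    (hdim : ∀ W ∈ S, Module.finrank F W = r)
    (hdisj : ∀ W1 ∈ S, ∀ W2 ∈ S, W1 ≠ W2 → W1 ⊓ W2 = ⊥) :
    S.card ≤ (Fintype.card F ^ v - Fintype.card F) / (Fintype.card F ^ r - 1)
      - Fintype.card F + 1 := by
  obtain ⟨B, hB⟩ := Nat.pow_sub_one_dvd_pow_sub_self (Fintype.card F) hmod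
  have hqr : 0 < Fintype.card F ^ r - 1 :=
    Nat.sub_pos_of_lt (Nat.one_lt_pow (by omega) Fintype.one_lt_card)
  rw [hB, Nat.mul_div_cancel_left _ hqr]
  exact card_le_sub_add_one_of_mul_eq hdisj hdim hr (by rwa [finrank_fin_fun])

/-- If v ≥ 2r+1 and v ≡ 1 (mod r), any partial r-spread in PG(v−1, F_q) has size
at most (q^v − q)/(q^r − 1) − q + 1. -/
theorem partial_spread_bound {F : Type*} [Field F] [Fintype F] {v r : ℕ}
    (hr : 2 ≤ r) (hv : 2 * r + 1 ≤ v) (hmod : v % r = 1)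
    (S : Finset (Submodule F (Fin v → F)))
    (hdim : ∀ W ∈ S, Module.finrank F W = r)
    (hdisj : ∀ W1 ∈ S, ∀ W2 ∈ S, W1 ≠ W2 → W1 ⊓ W2 = ⊥) :
    S.card ≤ (Fintype.card F ^ v - Fintype.card F) / (Fintype.card F ^ r - 1)
      - Fintype.card F + 1 :=
  partial_spread_bound_general hr hmod S hdim hdisj
end

section
/- There is no projective doubly-even binary linear code of length 10, i.e., no binary linear [10, k] code with all weights divisible by 4 whose dual minimum distance is at least 3. -/
open Matrix Finset

private lemma zmod2_cases (a : ZMod 2) : a = 0 ∨ a = 1 := by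
  have h : ∀ b : ZMod 2, b = 0 ∨ b = 1 := by decide
  exact h a

private lemma fiber_card_eq {α β : Type*} [Fintype α] [DecidableEq β]
    [AddCommGroup α] [AddCommGroup β]
    (f : α → β) (hadd : ∀ a b, f (a + b) = f a + f b)
    (hsurj : Function.Surjective f) (s t : β) :
    (Finset.univ.filter fun x => f x = s).card =
      (Finset.univ.filter fun x => f x = t).card := by
  classical
  have hsub : ∀ a b : α, f (a - b) = f a - f b := by
    intro a b
    have h1 : f (a - b) + f b = f a := by
      rw [← hadd]; congr 1; abel
    exact eq_sub_of_add_eq h1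
  obtain ⟨d, hd⟩ := hsurj (t - s)
  apply Finset.card_bij' (fun x _ => x + d) (fun x _ => x - d)
  · intro a ha
    simp only [Finset.mem_filter, Finset.mem_univ, true_and] at ha ⊢
    rw [hadd, ha, hd]
    abel
  · intro a ha
    simp only [Finset.mem_filter, Finset.mem_univ, true_and] at ha ⊢
    rw [hsub, ha, hd]
    abel
  · intro a _
    abel
  · intro a _
    abel

private lemma fiber_card_mul {α β : Type*} [Fintype α] [Fintype β] [DecidableEq β]
    [AddCommGroup α] [AddCommGroup β]
    (f : α → β) (hadd : ∀ a b, f (a + b) = f a + f b)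
    (hsurj : Function.Surjective f) (s : β) :
    (Finset.univ.filter fun x => f x = s).card * Fintype.card β = Fintype.card α := by
  classical
  have h := Finset.card_eq_sum_card_fiberwise
    (s := (Finset.univ : Finset α)) (t := (Finset.univ : Finset β)) (f := f)
    (fun x _ => Finset.mem_univ _)
  have h2 : ∀ b ∈ (Finset.univ : Finset β),
      (Finset.univ.filter fun x => f x = b).card =
        (Finset.univ.filter fun x => f x = s).card :=
    fun b _ => fiber_card_eq f hadd hsurj b s
  rw [Finset.sum_congr rfl h2, Finset.sum_const, smul_eq_mul] at h
  rw [mul_comm]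
  rw [← Finset.card_univ, ← Finset.card_univ, h]

/-- There is no projective doubly-even binary linear code of length 10. -/
theorem no_projective_doubly_even_length_ten :
    ¬ ∃ (k : ℕ) (G : Matrix (Fin k) (Fin 10) (ZMod 2)),
      (∀ j, (fun i => G i j) ≠ 0) ∧
      (∀ j1 j2 : Fin 10, (fun i => G i j1) = (fun i => G i j2) → j1 = j2) ∧
      (∀ x : Fin k → ZMod 2, 4 ∣ hammingNorm (x ᵥ* G)) := by
  classical
  rintro ⟨k, G, hnz, hinj, hdiv⟩
  have hcardV : Fintype.card (Fin k → ZMod 2) = 2 ^ k := by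
    simp [Fintype.card_fun]
  -- each column hits 1
  have hone : ∀ j : Fin 10, ∃ v : Fin k → ZMod 2, (v ᵥ* G) j = 1 := by
    intro j
    have h := hnz j
    rw [Function.ne_iff] at h
    obtain ⟨i, hi⟩ := h
    refine ⟨Pi.single i 1, ?_⟩
    have : Pi.single i (1 : ZMod 2) ᵥ* G = G i := single_one_vecMul i G
    rw [this]
    rcases zmod2_cases (G i j) with h' | h'
    · exact absurd h' hi
    · exact h'
  have hadd1 : ∀ (j : Fin 10) (a b : Fin k → ZMod 2),
      ((a + b) ᵥ* G) j = (a ᵥ* G) j + (b ᵥ* G) j := by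
    intro j a b
    rw [add_vecMul]
    rfl
  have hsurj1 : ∀ j : Fin 10,
      Function.Surjective (fun x : Fin k → ZMod 2 => (x ᵥ* G) j) := by
    intro j s
    rcases zmod2_cases s with rfl | rfl
    · exact ⟨0, by simp⟩
    · exact hone j
  -- single-column fiber count
  have hcol : ∀ j : Fin 10,
      (Finset.univ.filter fun x : Fin k → ZMod 2 => (x ᵥ* G) j = 1).card * 2 = 2 ^ k := by
    intro j
    have h := fiber_card_mul (fun x : Fin k → ZMod 2 => (x ᵥ* G) j)
      (fun a b => hadd1 j a b) (hsurj1 j) 1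
    rwa [hcardV, ZMod.card 2] at h
  -- pair fiber count
  have hpair : ∀ j1 j2 : Fin 10, j1 ≠ j2 →
      (Finset.univ.filter fun x : Fin k → ZMod 2 =>
        (x ᵥ* G) j1 = 1 ∧ (x ᵥ* G) j2 = 1).card * 4 = 2 ^ k := by
    intro j1 j2 hne
    set g : (Fin k → ZMod 2) → ZMod 2 × ZMod 2 :=
      fun x => ((x ᵥ* G) j1, (x ᵥ* G) j2) with hg
    have hgadd : ∀ a b, g (a + b) = g a + g b := by
      intro a b
      simp only [hg, Prod.mk_add_mk, Prod.mk.injEq]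
      exact ⟨hadd1 j1 a b, hadd1 j2 a b⟩
    have hx : (∃ x, g x = (1, 0)) ∧ (∃ x, g x = (0, 1)) := by
      obtain ⟨a, ha⟩ := hone j1
      obtain ⟨b, hb⟩ := hone j2
      have hc : ∃ c : Fin k → ZMod 2, (c ᵥ* G) j1 ≠ (c ᵥ* G) j2 := by
        have h : (fun i => G i j1) ≠ fun i => G i j2 := fun h => hne (hinj _ _ h)
        rw [Function.ne_iff] at h
        obtain ⟨i, hi⟩ := h
        refine ⟨Pi.single i 1, ?_⟩
        rw [single_one_vecMul]
        exact hi
      rcases zmod2_cases ((a ᵥ* G) j2) with h2 | h2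
      · have ha' : g a = (1, 0) := by simp [hg, ha, h2]
        rcases zmod2_cases ((b ᵥ* G) j1) with h1 | h1
        · exact ⟨⟨a, ha'⟩, ⟨b, by simp [hg, hb, h1]⟩⟩
        · have hb' : g b = (1, 1) := by simp [hg, hb, h1]
          exact ⟨⟨a, ha'⟩, ⟨a + b, by rw [hgadd, ha', hb']; decide⟩⟩
      · have ha' : g a = (1, 1) := by simp [hg, ha, h2]
        rcases zmod2_cases ((b ᵥ* G) j1) with h1 | h1
        · have hb' : g b = (0, 1) := by simp [hg, hb, h1]
          exact ⟨⟨a + b, by rw [hgadd, ha', hb']; decide⟩, ⟨b, hb'⟩⟩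
        · obtain ⟨c, hcne⟩ := hc
          rcases zmod2_cases ((c ᵥ* G) j1) with hc1 | hc1 <;>
            rcases zmod2_cases ((c ᵥ* G) j2) with hc2 | hc2
          · exact absurd (hc1.trans hc2.symm) hcne
          · have hc' : g c = (0, 1) := by simp [hg, hc1, hc2]
            exact ⟨⟨a + c, by rw [hgadd, ha', hc']; decide⟩, ⟨c, hc'⟩⟩
          · have hc' : g c = (1, 0) := by simp [hg, hc1, hc2]
            exact ⟨⟨c, hc'⟩, ⟨a + c, by rw [hgadd, ha', hc']; decide⟩⟩
          · exact absurd (hc1.trans hc2.symm) hcne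
    have hgsurj : Function.Surjective g := by
      obtain ⟨⟨p, hp⟩, ⟨q, hq⟩⟩ := hx
      rintro ⟨s, t⟩
      rcases zmod2_cases s with rfl | rfl <;> rcases zmod2_cases t with rfl | rfl
      · refine ⟨0, ?_⟩
        simp [hg]
      · exact ⟨q, hq⟩
      · exact ⟨p, hp⟩
      · exact ⟨p + q, by rw [hgadd, hp, hq]; decide⟩
    have h := fiber_card_mul g hgadd hgsurj (1, 1)
    have hcard4 : Fintype.card (ZMod 2 × ZMod 2) = 4 := by
      simp [Fintype.card_prod, ZMod.card]
    rw [hcardV, hcard4] at h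
    have hset : (Finset.univ.filter fun x : Fin k → ZMod 2 =>
        (x ᵥ* G) j1 = 1 ∧ (x ᵥ* G) j2 = 1) =
        Finset.univ.filter fun x => g x = (1, 1) := by
      apply Finset.filter_congr
      intro x _
      simp [hg, Prod.ext_iff]
    rw [hset]
    exact h
  -- weight as a sum of indicators
  have hiff : ∀ a : ZMod 2, a ≠ 0 ↔ a = 1 := by decide
  have hWsum : ∀ x : Fin k → ZMod 2,
      hammingNorm (x ᵥ* G) = ∑ j : Fin 10, if (x ᵥ* G) j = 1 then 1 else 0 := by
    intro x
    rw [hammingNorm, Finset.card_filter]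
    apply Finset.sum_congr rfl
    intro j _
    exact if_congr (hiff _) rfl rfl
  set P := 2 ^ k with hP
  set S1 := ∑ x : Fin k → ZMod 2, hammingNorm (x ᵥ* G) with hS1def
  set S2 := ∑ x : Fin k → ZMod 2, hammingNorm (x ᵥ* G) * hammingNorm (x ᵥ* G) with hS2def
  -- first moment
  have hS1 : 2 * S1 = 10 * P := by
    have e1 : S1 = ∑ j : Fin 10,
        (Finset.univ.filter fun x : Fin k → ZMod 2 => (x ᵥ* G) j = 1).card := by
      rw [hS1def]
      rw [Finset.sum_congr rfl fun x _ => hWsum x]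
      rw [Finset.sum_comm]
      exact Finset.sum_congr rfl fun j _ => (Finset.card_filter _ _).symm
    rw [e1, Finset.mul_sum]
    rw [Finset.sum_congr rfl fun j (_ : j ∈ Finset.univ) => by
      rw [mul_comm, hcol j]]
    simp [Finset.sum_const, Finset.card_univ, mul_comm]
  -- second moment
  have hS2 : 4 * S2 = 110 * P := by
    have e2 : S2 = ∑ j1 : Fin 10, ∑ j2 : Fin 10,
        (Finset.univ.filter fun x : Fin k → ZMod 2 =>
          (x ᵥ* G) j1 = 1 ∧ (x ᵥ* G) j2 = 1).card := by
      rw [hS2def]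
      have e2a : ∀ x : Fin k → ZMod 2,
          hammingNorm (x ᵥ* G) * hammingNorm (x ᵥ* G) =
          ∑ j1 : Fin 10, ∑ j2 : Fin 10,
            (if (x ᵥ* G) j1 = 1 ∧ (x ᵥ* G) j2 = 1 then 1 else 0) := by
        intro x
        rw [hWsum, Finset.sum_mul_sum]
        refine Finset.sum_congr rfl fun j1 _ => Finset.sum_congr rfl fun j2 _ => ?_
        by_cases h1 : (x ᵥ* G) j1 = 1 <;> by_cases h2 : (x ᵥ* G) j2 = 1 <;>
          simp [h1, h2]
      rw [Finset.sum_congr rfl fun x _ => e2a x]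
      rw [Finset.sum_comm]
      refine Finset.sum_congr rfl fun j1 _ => ?_
      rw [Finset.sum_comm]
      exact Finset.sum_congr rfl fun j2 _ => (Finset.card_filter _ _).symm
    have key : ∀ j1 j2 : Fin 10,
        4 * (Finset.univ.filter fun x : Fin k → ZMod 2 =>
          (x ᵥ* G) j1 = 1 ∧ (x ᵥ* G) j2 = 1).card =
        P + (if j1 = j2 then P else 0) := by
      intro j1 j2
      by_cases h : j1 = j2
      · subst h
        rw [if_pos rfl]
        have hfe : (Finset.univ.filter fun x : Fin k → ZMod 2 =>
            (x ᵥ* G) j1 = 1 ∧ (x ᵥ* G) j1 = 1) =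
            Finset.univ.filter fun x : Fin k → ZMod 2 => (x ᵥ* G) j1 = 1 := by
          apply Finset.filter_congr
          intro x _
          simp
        rw [hfe]
        have := hcol j1
        omega
      · rw [if_neg h, add_zero, mul_comm]
        exact hpair j1 j2 h
    calc 4 * S2 = ∑ j1 : Fin 10, ∑ j2 : Fin 10,
        (P + if j1 = j2 then P else 0) := by
          rw [e2, Finset.mul_sum]
          refine Finset.sum_congr rfl fun j1 _ => ?_
          rw [Finset.mul_sum]
          exact Finset.sum_congr rfl fun j2 _ => key j1 j2
      _ = 110 * P := by
          simp [Finset.sum_add_distrib, Finset.sum_ite_eq, Finset.sum_const,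
            Finset.card_univ]
          ring
  -- pointwise identity and the count of nonzero codewords
  set M := (Finset.univ.filter fun x : Fin k → ZMod 2 => ¬ (x ᵥ* G) = 0).card with hMdef
  have hpt : ∀ x : Fin k → ZMod 2,
      24 * hammingNorm (x ᵥ* G) =
      2 * (hammingNorm (x ᵥ* G) * hammingNorm (x ᵥ* G)) +
        (if ¬ (x ᵥ* G) = 0 then 64 else 0) := by
    intro x
    by_cases h : (x ᵥ* G) = 0
    · simp [h]
    · have h4 := hdiv x
      have hle : hammingNorm (x ᵥ* G) ≤ 10 := by
        have := hammingNorm_le_card_fintype (x := x ᵥ* G)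
        simpa using this
      have hne : hammingNorm (x ᵥ* G) ≠ 0 := by
        rw [hammingNorm_ne_zero_iff]
        exact h
      rw [if_pos h]
      have h48 : hammingNorm (x ᵥ* G) = 4 ∨ hammingNorm (x ᵥ* G) = 8 := by omega
      rcases h48 with h' | h' <;> rw [h'] <;> norm_num
  have hsum : 24 * S1 = 2 * S2 + 64 * M := by
    rw [hS1def, hS2def, hMdef, Finset.mul_sum, Finset.mul_sum,
      Finset.card_filter, Finset.mul_sum]
    rw [← Finset.sum_add_distrib]
    refine Finset.sum_congr rfl fun x _ => ?_
    rw [hpt x]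
    congr 1
    by_cases h : (x ᵥ* G) = 0 <;> simp [h]
  -- M < P since 0 is not counted
  have hM : M < P := by
    have hss : (Finset.univ.filter fun x : Fin k → ZMod 2 => ¬ (x ᵥ* G) = 0) ⊂
        Finset.univ := by
      rw [Finset.ssubset_iff_of_subset (Finset.filter_subset _ _)]
      refine ⟨0, Finset.mem_univ _, ?_⟩
      simp [Matrix.zero_vecMul]
    have h := Finset.card_lt_card hss
    rw [Finset.card_univ, hcardV] at h
    exact h
  have hP1 : 1 ≤ P := Nat.one_le_two_pow
  omega
end

section
/- Cone construction: let H be a hyperplane of PG(v−1, F_q), P a point not in H, and B a set of points of H such that |B| ≡ 0 (mod q^(r+1)) and B is q^r-divisible within H. Let K be the union over Q ∈ B of the lines PQ, with the point P removed. Then K is q^(r+1)-divisible: the number of points of K outside any hyperplane of PG(v−1, F_q) is divisible by q^(r+1). -/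
/-!
Two cone lines `P ⊔ Q` and `P ⊔ Q'` with `Q ≠ Q'` in `B` meet only in `P` (modular law, since
`Q, Q' ≤ H` and `P ⊓ H = ⊥`), so the points of `K` outside a hyperplane `W` are counted line by
line. The points of `P ⊔ Q` other than `P = ⟨p⟩` are the `q` points `⟨u + t p⟩`, `t ∈ F`, where
`Q = ⟨u⟩`. If `P ≤ W`, either all of them lie outside `W` (when `Q ⊄ W`) or none does, giving
`q · #{Q ∈ B | Q ⊄ H ⊓ W}`, and `H ⊓ W` is a hyperplane of `H`. If `P ⊄ W`, then `W ⊕ ⟨p⟩` is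
everything and exactly one of them lies in `W`, giving `(q - 1) · |B|`.
-/

open Submodule Module Set

section ModularLattice

variable {α : Type*} [Lattice α] [OrderBot α] [IsModularLattice α]

theorem sup_inf_sup_eq_of_disjoint {p h q q' : α} (hph : Disjoint p h) (hqh : q ≤ h)
    (hq'h : q' ≤ h) (hqq' : Disjoint q q') : (p ⊔ q) ⊓ (p ⊔ q') = p := by
  have hq' : (q' ⊔ p) ⊓ h = q' := by
    rw [sup_inf_assoc_of_le p hq'h, hph.eq_bot, sup_bot_eq]
  have hq : q ⊓ (p ⊔ q') = ⊥ := by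
    rw [← inf_eq_left.2 hqh, sup_comm p q', inf_assoc, inf_comm h, hq']
    exact hqq'.eq_bot
  rw [sup_inf_assoc_of_le q le_sup_left, hq, sup_bot_eq]

def puncturedLine (p q : α) : Set α := {r | IsAtom r ∧ r ≠ p ∧ r ≤ p ⊔ q}

theorem pairwiseDisjoint_puncturedLine {p h : α} {s : Set α} (hp : IsAtom p) (hph : ¬ p ≤ h)
    (hs : ∀ q ∈ s, IsAtom q ∧ q ≤ h) : s.PairwiseDisjoint (puncturedLine p) := by
  intro q hq q' hq' hne
  refine Set.disjoint_left.2 fun r ⟨hr, hrp, hrq⟩ ⟨_, _, hrq'⟩ => hrp ?_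
  have hpqq' := sup_inf_sup_eq_of_disjoint (hp.not_le_iff_disjoint.1 hph) (hs q hq).2
    (hs q' hq').2 ((hs q hq).1.disjoint_of_ne (hs q' hq').1 hne)
  exact (hp.le_iff_eq hr.ne_bot).1 (hpqq' ▸ le_inf hrq hrq')

end ModularLattice

theorem Set.Finite.ncard_biUnion_of_ncard_eq {ι α : Type*} {t : Set ι} {s : ι → Set α} {c : ℕ}
    (ht : t.Finite) (hs : ∀ i ∈ t, (s i).Finite) (h : t.PairwiseDisjoint s)
    (hc : ∀ i ∈ t, (s i).ncard = c) : (⋃ i ∈ t, s i).ncard = c * t.ncard := by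
  rw [ht.ncard_biUnion hs h, finsum_mem_congr rfl hc, ← finsum_one, mul_finsum_mem' _ _ ht]
  simp

section Line

variable {K V : Type*} [Field K] [AddCommGroup V] [Module K V]

theorem puncturedLine_span_eq_range {p u : V} (hu : u ∉ K ∙ p) :
    puncturedLine (K ∙ p) (K ∙ u) = range fun t : K => K ∙ (u + t • p) := by
  ext R
  constructor
  · rintro ⟨hR, hRp, hRle⟩
    obtain ⟨w, hw, rfl⟩ := (atom_iff_nonzero_span R).1 hR
    rw [← span_insert, span_singleton_le_iff_mem, mem_span_pair] at hRle
    obtain ⟨a, b, rfl⟩ := hRle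
    have hb : b ≠ 0 := by
      rintro rfl
      have ha : a ≠ 0 := by rintro rfl; simp at hw
      exact hRp (by simpa using span_singleton_smul_eq (IsUnit.mk0 a ha) p)
    have hrep : b⁻¹ • (a • p + b • u) = u + (b⁻¹ * a) • p := by
      rw [smul_add, smul_smul, smul_smul, inv_mul_cancel₀ hb, one_smul, add_comm]
    refine mem_range.2 ⟨b⁻¹ * a, ?_⟩
    rw [← hrep]
    exact span_singleton_smul_eq (IsUnit.mk0 _ (inv_ne_zero hb)) _
  · rintro ⟨t, rfl⟩
    have hpt : t • p ∈ K ∙ p := smul_mem _ _ (mem_span_singleton_self p)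
    have hne : u + t • p ≠ 0 := fun h => hu (by rw [eq_neg_of_add_eq_zero_left h]; exact neg_mem hpt)
    refine ⟨nonzero_span_atom _ hne, fun h => hu ?_, ?_⟩
    · exact ((K ∙ p).add_mem_iff_left hpt).1 (h ▸ mem_span_singleton_self _)
    · rw [span_singleton_le_iff_mem, add_comm]
      exact add_mem_sup hpt (mem_span_singleton_self u)

theorem injective_span_add_smul {p u : V} (hp : p ≠ 0) (hu : u ∉ K ∙ p) :
    Function.Injective fun t : K => K ∙ (u + t • p) := by
  intro s t hst
  have hs : u + s • p ∈ K ∙ (u + t • p) := by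
    dsimp only at hst
    exact hst ▸ mem_span_singleton_self _
  obtain ⟨c, hc⟩ := mem_span_singleton.1 hs
  have hc1 : c = 1 := by
    by_contra hc1
    have hcu : (c - 1) • u = (s - c * t) • p := by linear_combination (norm := module) hc
    refine hu (mem_span_singleton.2 ⟨(c - 1)⁻¹ * (s - c * t), ?_⟩)
    rw [mul_smul, ← hcu, inv_smul_smul₀ (sub_ne_zero.2 hc1)]
  subst hc1
  simpa [smul_left_injective K hp |>.eq_iff] using hc.symm

theorem ncard_puncturedLine_span_inter {p u : V} (hp : p ≠ 0) (hu : u ∉ K ∙ p)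
    (W : Submodule K V) :
    (puncturedLine (K ∙ p) (K ∙ u) ∩ {R | ¬ R ≤ W}).ncard = {t : K | u + t • p ∉ W}.ncard := by
  rw [puncturedLine_span_eq_range hu, ← image_preimage_eq_range_inter,
    ncard_image_of_injective _ (injective_span_add_smul hp hu)]
  simp only [preimage_ofPred_eq, span_singleton_le_iff_mem]

theorem ncard_setOf_add_smul_notMem_of_mem {W : Submodule K V} {p u : V} (hp : p ∈ W)
    (hu : u ∉ W) : {t : K | u + t • p ∉ W}.ncard = Nat.card K := by
  have : {t : K | u + t • p ∉ W} = univ := by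
    ext t
    simpa [W.add_mem_iff_left (W.smul_mem t hp)] using hu
  rw [this, ncard_univ]

theorem ncard_setOf_add_smul_notMem_of_notMem [Finite K] {W : Submodule K V} (hW : IsCoatom W)
    {p : V} (hp : p ∉ W) (u : V) : {t : K | u + t • p ∉ W}.ncard = Nat.card K - 1 := by
  obtain ⟨w, hw, s, rfl⟩ : ∃ w ∈ W, ∃ s : K, w + s • p = u := by
    obtain ⟨w, hw, y, hy, rfl⟩ :=
      mem_sup.1 ((isCompl_span_singleton_of_isCoatom_of_notMem hW hp).sup_eq_top ▸ mem_top (x := u))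
    obtain ⟨s, rfl⟩ := mem_span_singleton.1 hy
    exact ⟨w, hw, s, rfl⟩
  have : {t : K | w + s • p + t • p ∉ W} = {-s}ᶜ := by
    ext t
    rw [mem_ofPred_eq, add_assoc, ← add_smul, W.add_mem_iff_right hw, mem_compl_singleton_iff,
      ← sub_ne_zero, sub_neg_eq_add, add_comm t, not_iff_not]
    by_cases hst : s + t = 0 <;> simp [hst, W.smul_mem_iff, hp]
  rw [this, ncard_compl, ncard_singleton]

theorem exists_eq_span_of_isAtom_of_ne {P Q : Submodule K V} (hP : IsAtom P) (hQ : IsAtom Q)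
    (hPQ : P ≠ Q) : ∃ p u : V, p ≠ 0 ∧ u ∉ K ∙ p ∧ P = K ∙ p ∧ Q = K ∙ u := by
  obtain ⟨p, hp, rfl⟩ := (atom_iff_nonzero_span P).1 hP
  obtain ⟨u, -, rfl⟩ := (atom_iff_nonzero_span Q).1 hQ
  refine ⟨p, u, hp, fun hu => hPQ ?_, rfl, rfl⟩
  exact ((hP.le_iff_eq hQ.ne_bot).1 ((span_singleton_le_iff_mem _ _).2 hu)).symm

theorem ncard_puncturedLine_inter_of_le {P Q W : Submodule K V} (hP : IsAtom P) (hQ : IsAtom Q)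
    (hPW : P ≤ W) (hQW : ¬ Q ≤ W) :
    (puncturedLine P Q ∩ {R | ¬ R ≤ W}).ncard = Nat.card K := by
  obtain ⟨p, u, hp, hu, rfl, rfl⟩ :=
    exists_eq_span_of_isAtom_of_ne hP hQ (fun h => hQW (h ▸ hPW))
  rw [span_singleton_le_iff_mem] at hPW hQW
  rw [ncard_puncturedLine_span_inter hp hu, ncard_setOf_add_smul_notMem_of_mem hPW hQW]

theorem ncard_puncturedLine_inter_of_not_le [Finite K] {P Q W : Submodule K V} (hP : IsAtom P)
    (hQ : IsAtom Q) (hPQ : P ≠ Q) (hW : IsCoatom W) (hPW : ¬ P ≤ W) :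
    (puncturedLine P Q ∩ {R | ¬ R ≤ W}).ncard = Nat.card K - 1 := by
  obtain ⟨p, u, hp, hu, rfl, rfl⟩ := exists_eq_span_of_isAtom_of_ne hP hQ hPQ
  rw [span_singleton_le_iff_mem] at hPW
  rw [ncard_puncturedLine_span_inter hp hu, ncard_setOf_add_smul_notMem_of_notMem hW hPW]

end Line

section Hyperplane

variable {K V : Type*} [Field K] [AddCommGroup V] [Module K V] [FiniteDimensional K V]

theorem Submodule.isCoatom_of_finrank_add_one_eq {W : Submodule K V}
    (hW : finrank K W + 1 = finrank K V) : IsCoatom W := by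
  refine ⟨fun h => by rw [h, finrank_top] at hW; omega, fun X hWX => eq_top_of_finrank_eq ?_⟩
  have := finrank_lt_finrank_of_lt hWX
  have := X.finrank_le
  omega

theorem Submodule.finrank_inf_add_two_of_ne {H W : Submodule K V}
    (hH : finrank K H + 1 = finrank K V) (hW : finrank K W + 1 = finrank K V) (hne : H ≠ W) :
    finrank K ↥(H ⊓ W) + 2 = finrank K V := by
  have hsup := (isCoatom_of_finrank_add_one_eq hH).sup_eq_top_of_ne
    (isCoatom_of_finrank_add_one_eq hW) hne
  have := finrank_sup_add_finrank_inf_eq H W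
  rw [hsup, finrank_top] at this
  omega

end Hyperplane

section Cone

variable {K V : Type*} [Field K] [Finite K] [AddCommGroup V] [Module K V] [FiniteDimensional K V]
  {P H W : Submodule K V} {B : Set (Submodule K V)}

theorem Submodule.finite_of_finite : Finite (Submodule K V) :=
  have := Module.finite_of_finite K (M := V)
  Finite.of_injective _ SetLike.coe_injective

theorem ncard_cone_inter_of_le (hP : IsAtom P) (hPH : ¬ P ≤ H) (hB : ∀ Q ∈ B, IsAtom Q ∧ Q ≤ H)
    (hPW : P ≤ W) :
    ((⋃ Q ∈ B, puncturedLine P Q) ∩ {R | ¬ R ≤ W}).ncard =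
      Nat.card K * {Q ∈ B | ¬ Q ≤ H ⊓ W}.ncard := by
  have := Submodule.finite_of_finite (K := K) (V := V)
  have hQW : ∀ Q ∈ B, ¬ Q ≤ H ⊓ W ↔ ¬ Q ≤ W := fun Q hQ => by simp [(hB Q hQ).2]
  have hcone : (⋃ Q ∈ B, puncturedLine P Q) ∩ {R | ¬ R ≤ W} =
      ⋃ Q ∈ {Q ∈ B | ¬ Q ≤ H ⊓ W}, puncturedLine P Q ∩ {R | ¬ R ≤ W} := by
    ext R
    simp only [mem_inter_iff, mem_iUnion, mem_sep_iff, exists_prop]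
    constructor
    · rintro ⟨⟨Q, hQ, hR⟩, hRW⟩
      exact ⟨Q, ⟨hQ, (hQW Q hQ).2 fun hle => hRW (hR.2.2.trans (sup_le hPW hle))⟩, hR, hRW⟩
    · rintro ⟨Q, ⟨hQ, -⟩, hR, hRW⟩
      exact ⟨⟨Q, hQ, hR⟩, hRW⟩
  rw [hcone]
  exact (toFinite _).ncard_biUnion_of_ncard_eq (fun _ _ => toFinite _)
    (((pairwiseDisjoint_puncturedLine hP hPH hB).subset (sep_subset _ _)).mono
      fun _ => inter_subset_left) fun Q hQ =>
    ncard_puncturedLine_inter_of_le hP (hB Q hQ.1).1 hPW ((hQW Q hQ.1).1 hQ.2)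

theorem ncard_cone_inter_of_not_le (hP : IsAtom P) (hPH : ¬ P ≤ H)
    (hB : ∀ Q ∈ B, IsAtom Q ∧ Q ≤ H) (hW : IsCoatom W) (hPW : ¬ P ≤ W) :
    ((⋃ Q ∈ B, puncturedLine P Q) ∩ {R | ¬ R ≤ W}).ncard = (Nat.card K - 1) * B.ncard := by
  have := Submodule.finite_of_finite (K := K) (V := V)
  rw [iUnion₂_inter]
  exact (toFinite _).ncard_biUnion_of_ncard_eq (fun _ _ => toFinite _)
    ((pairwiseDisjoint_puncturedLine hP hPH hB).mono fun _ => inter_subset_left) fun Q hQ =>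
    ncard_puncturedLine_inter_of_not_le hP (hB Q hQ).1 (fun h => hPH (h ▸ (hB Q hQ).2)) hW hPW

end Cone

theorem cone_construction_divisible_general {F : Type*} [Field F] [Fintype F] {v r : ℕ}
    (H : Submodule F (Fin v → F)) (hH : Module.finrank F H = v - 1)
    (P : Submodule F (Fin v → F)) (hP : Module.finrank F P = 1) (hPH : ¬ P ≤ H)
    (B : Set (Submodule F (Fin v → F)))
    (hB : ∀ Q ∈ B, Module.finrank F Q = 1 ∧ Q ≤ H)
    (hBcard : Fintype.card F ^ (r + 1) ∣ B.ncard)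
    (hBdiv : ∀ H' : Submodule F (Fin v → F), H' ≤ H → Module.finrank F H' = v - 2 →
      Fintype.card F ^ r ∣ {Q ∈ B | ¬ Q ≤ H'}.ncard) :
    ∀ H'' : Submodule F (Fin v → F), Module.finrank F H'' = v - 1 →
      Fintype.card F ^ (r + 1) ∣
        {R : Submodule F (Fin v → F) |
          (Module.finrank F R = 1 ∧ R ≠ P ∧ ∃ Q ∈ B, R ≤ P ⊔ Q) ∧ ¬ R ≤ H''}.ncard := by
  intro W hW
  have hv : 1 ≤ v := finrank_fin_fun F (n := v) ▸ hP ▸ P.finrank_le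
  have hH1 : finrank F H + 1 = finrank F (Fin v → F) := by rw [finrank_fin_fun]; omega
  have hW1 : finrank F W + 1 = finrank F (Fin v → F) := by rw [finrank_fin_fun]; omega
  have hPatom : IsAtom P := isAtom_iff_finrank_eq_one.2 hP
  have hBatom : ∀ Q ∈ B, IsAtom Q ∧ Q ≤ H :=
    fun Q hQ => ⟨isAtom_iff_finrank_eq_one.2 (hB Q hQ).1, (hB Q hQ).2⟩
  have hcone : {R : Submodule F (Fin v → F) |
      (finrank F R = 1 ∧ R ≠ P ∧ ∃ Q ∈ B, R ≤ P ⊔ Q) ∧ ¬ R ≤ W} =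
      (⋃ Q ∈ B, puncturedLine P Q) ∩ {R | ¬ R ≤ W} := by
    ext R
    simp only [puncturedLine, isAtom_iff_finrank_eq_one, mem_inter_iff, mem_iUnion, exists_prop,
      mem_ofPred_eq]
    exact ⟨fun ⟨⟨hR, hRP, Q, hQ, hRQ⟩, hRW⟩ => ⟨⟨Q, hQ, hR, hRP, hRQ⟩, hRW⟩,
      fun ⟨⟨Q, hQ, hR, hRP, hRQ⟩, hRW⟩ => ⟨⟨hR, hRP, Q, hQ, hRQ⟩, hRW⟩⟩
  rw [hcone]
  by_cases hPW : P ≤ W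
  · have hHW := finrank_inf_add_two_of_ne hH1 hW1 fun h => hPH (h ▸ hPW)
    rw [finrank_fin_fun] at hHW
    rw [ncard_cone_inter_of_le hPatom hPH hBatom hPW, Nat.card_eq_fintype_card, pow_succ']
    exact mul_dvd_mul_left _ (hBdiv (H ⊓ W) inf_le_left (by omega))
  · rw [ncard_cone_inter_of_not_le hPatom hPH hBatom (isCoatom_of_finrank_add_one_eq hW1) hPW,
      Nat.card_eq_fintype_card]
    exact hBcard.mul_left _

/-- Cone construction: if B is a q^r-divisible set of points of a hyperplane H with
|B| ≡ 0 (mod q^(r+1)), P a point outside H, and K the union of the lines PQ (Q ∈ B)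
with P removed, then K is q^(r+1)-divisible. -/
theorem cone_construction_divisible {F : Type*} [Field F] [Fintype F] {v r : ℕ}
    (hv : 2 ≤ v)
    (H : Submodule F (Fin v → F)) (hH : Module.finrank F H = v - 1)
    (P : Submodule F (Fin v → F)) (hP : Module.finrank F P = 1) (hPH : ¬ P ≤ H)
    (B : Set (Submodule F (Fin v → F)))
    (hB : ∀ Q ∈ B, Module.finrank F Q = 1 ∧ Q ≤ H)
    (hBcard : Fintype.card F ^ (r + 1) ∣ B.ncard)
    (hBdiv : ∀ H' : Submodule F (Fin v → F), H' ≤ H → Module.finrank F H' = v - 2 →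
      Fintype.card F ^ r ∣ {Q ∈ B | ¬ Q ≤ H'}.ncard) :
    ∀ H'' : Submodule F (Fin v → F), Module.finrank F H'' = v - 1 →
      Fintype.card F ^ (r + 1) ∣
        {R : Submodule F (Fin v → F) |
          (Module.finrank F R = 1 ∧ R ≠ P ∧ ∃ Q ∈ B, R ≤ P ⊔ Q) ∧ ¬ R ≤ H''}.ncard :=
  cone_construction_divisible_general H hH P hP hPH B hB hBcard hBdiv
end

section
/- A projective 2-divisible binary linear [n,k] code exists if and only if k+1 ≤ n ≤ 2^k − 1 and n ∉ {2^k − 3, 2^k − 2}. -/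
/-!
Evenness of a code says that the all-ones vector is orthogonal to it, i.e. that the columns of a
generator matrix sum to zero; projectivity says that they are distinct and nonzero. So an even
projective `[n, k]` code is the same as a spanning set `S` of `n` nonzero points of `𝔽₂ᵏ` with
`∑ S = 0`.

Lower bound: the code lies in the even-weight hyperplane, so `k < n`. Upper bounds: for `k ≥ 2`
all nonzero points of `𝔽₂ᵏ` sum to zero, so the complement of `S` among them is again a zero-sum
set, and a zero-sum set of nonzero points never has one or two elements.

Construction: replacing a point `v ∈ S` by `a` and `a + v`, with `a ∉ S ∪ (S + v) ∪ {0}`,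
enlarges `S` by one while keeping the sum and the span, as long as `2 |S| + 1 < 2ᵏ`. Starting
from a basis together with its sum this gives every `n ≤ 2ᵏ⁻¹`; larger `n` are obtained as
complements of zero-sum sets of size `2ᵏ - 1 - n ∈ {0} ∪ [3, 2ᵏ⁻¹)`, which span because they
contain more than half of the space.
-/

open Finset Module

theorem even_hammingNorm_iff_sum_eq_zero {ι : Type*} [Fintype ι] (c : ι → ZMod 2) :
    Even (hammingNorm c) ↔ ∑ i, c i = 0 := by
  have hcast : (hammingNorm c : ZMod 2) = ∑ i, c i := by
    rw [hammingNorm, ← sum_filter_ne_zero, card_eq_sum_ones, Nat.cast_sum, Nat.cast_one]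
    have hone : ∀ a : ZMod 2, a ≠ 0 → 1 = a := by decide
    exact sum_congr rfl fun i hi => hone _ (mem_filter.mp hi).2
  rw [← ZMod.natCast_eq_zero_iff_even, hcast]

theorem span_eq_top_of_card_lt {R M : Type*} [Ring R] [AddCommGroup M] [Module R M] [Fintype M]
    (S : Finset M) (hS : Fintype.card M < 2 * S.card) :
    Submodule.span R (S : Set M) = ⊤ := by
  by_contra hW
  set W := Submodule.span R (S : Set M)
  have hindex : 2 ≤ W.toAddSubgroup.index :=
    AddSubgroup.one_lt_index_of_ne_top (by simpa using hW)
  have hSW : S.card ≤ Nat.card W := by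
    classical
    rw [← Nat.card_eq_finsetCard]
    exact Nat.card_mono (Set.toFinite _) Submodule.subset_span
  have := W.toAddSubgroup.card_mul_index
  rw [Nat.card_eq_fintype_card (α := M)] at this
  change Nat.card W * _ = _ at this
  nlinarith

theorem ZModModule.sum_univ_eq_zero {V : Type*} [AddCommGroup V] [Module (ZMod 2) V] [Fintype V]
    (hV : 2 ≤ finrank (ZMod 2) V) : ∑ x : V, x = 0 := by
  -- Every functional `f` kills the sum: pair `x` with `x + v` for a nonzero `v ∈ ker f`.
  refine (forall_dual_apply_eq_zero_iff (ZMod 2) _).mp fun f => ?_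
  obtain ⟨v, hv, hv0⟩ : ∃ v ∈ LinearMap.ker f, v ≠ 0 := by
    refine Submodule.exists_mem_ne_zero_of_ne_bot fun hker => ?_
    have hrange := Submodule.finrank_le (LinearMap.range f)
    have := LinearMap.finrank_range_add_finrank_ker f
    rw [hker, finrank_bot] at this
    rw [finrank_self] at hrange
    omega
  rw [map_sum]
  refine sum_ninvolution (· + v) (fun x => ?_) (fun x _ => by simpa using hv0)
    (fun _ => mem_univ _) (fun x => by simp [add_assoc, ZModModule.add_self])
  rw [map_add, LinearMap.mem_ker.mp hv, add_zero, ZModModule.add_self]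

/-- The columns of a generator matrix of an even code, as points of `V`: every hyperplane
complement `{f = 1}` meets `S` in an even number of points iff `∑ S = 0`. -/
structure IsEvenPointSet {V : Type*} [AddCommMonoid V] (S : Finset V) : Prop where
  zero_notMem : (0 : V) ∉ S
  sum_eq_zero : ∑ x ∈ S, x = 0

namespace IsEvenPointSet

section AddCommMonoid

variable {V : Type*} [AddCommMonoid V] {S : Finset V}

theorem card_ne_one (hS : IsEvenPointSet S) : S.card ≠ 1 := by
  intro h
  obtain ⟨a, rfl⟩ := card_eq_one.mp h
  exact hS.zero_notMem (by simpa [eq_comm] using hS.sum_eq_zero)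

variable [Fintype V]

theorem card_lt (hS : IsEvenPointSet S) : S.card < Fintype.card V := by
  rw [← card_univ]
  exact card_lt_card <|
    (ssubset_iff_of_subset (subset_univ S)).mpr ⟨0, mem_univ _, hS.zero_notMem⟩

theorem card_compl_insert_zero [DecidableEq V] (hS : IsEvenPointSet S) :
    (insert 0 S)ᶜ.card = Fintype.card V - (S.card + 1) := by
  rw [Finset.card_compl, card_insert_of_notMem hS.zero_notMem]

end AddCommMonoid

variable {V : Type*} [AddCommGroup V] [Module (ZMod 2) V] {S : Finset V}

theorem card_ne_two (hS : IsEvenPointSet S) : S.card ≠ 2 := by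
  classical
  intro h
  obtain ⟨a, b, hab, rfl⟩ := card_eq_two.mp h
  have hsum : a + b = 0 := by simpa [sum_pair hab] using hS.sum_eq_zero
  exact hab (by rwa [add_eq_zero_iff_eq_neg, ZModModule.neg_eq_self] at hsum)

variable [Fintype V] [DecidableEq V]

theorem compl (hS : IsEvenPointSet S) (hV : 2 ≤ finrank (ZMod 2) V) :
    IsEvenPointSet (insert 0 S)ᶜ where
  zero_notMem := by simp
  sum_eq_zero := by
    have := sum_compl_add_sum (insert 0 S) id
    simpa only [id, sum_insert hS.zero_notMem, zero_add, hS.sum_eq_zero, add_zero,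
      ZModModule.sum_univ_eq_zero hV] using this

theorem card_add_two_ne (hS : IsEvenPointSet S) (hV : 2 ≤ finrank (ZMod 2) V) :
    S.card + 2 ≠ Fintype.card V := by
  have := (hS.compl hV).card_ne_one
  rw [hS.card_compl_insert_zero] at this
  omega

theorem card_add_three_ne (hS : IsEvenPointSet S) (hV : 2 ≤ finrank (ZMod 2) V) :
    S.card + 3 ≠ Fintype.card V := by
  have := (hS.compl hV).card_ne_two
  rw [hS.card_compl_insert_zero] at this
  omega

/-- Replacing `v ∈ S` by `a` and `a + v` keeps the sum and, since `v = a + (a + v)`, the span. -/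
theorem exists_card_succ (hS : IsEvenPointSet S) {v : V} (hv : v ∈ S)
    (hcard : 2 * S.card + 1 < Fintype.card V) :
    ∃ T : Finset V, IsEvenPointSet T ∧ T.card = S.card + 1 ∧
      Submodule.span (ZMod 2) (S : Set V) ≤ Submodule.span (ZMod 2) (T : Set V) := by
  obtain ⟨a, -, ha⟩ : ∃ a ∈ univ, a ∉ insert 0 (S ∪ S.image (· + v)) := by
    refine exists_mem_notMem_of_card_lt_card (lt_of_le_of_lt ?_ (card_univ (α := V) ▸ hcard))
    calc (insert 0 (S ∪ S.image (· + v))).card ≤ (S ∪ S.image (· + v)).card + 1 :=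
          card_insert_le _ _
      _ ≤ S.card + S.card + 1 := by grw [card_union_le, card_image_le]
      _ = 2 * S.card + 1 := by ring
  have ha0 : a ≠ 0 := by aesop
  have haS : a ∉ S := by aesop
  have havS : a + v ∉ S := fun h =>
    ha (mem_insert_of_mem (mem_union_right _ (mem_image.mpr ⟨a + v, h, by
      simp [add_assoc, ZModModule.add_self]⟩)))
  have hav0 : a + v ≠ 0 := by
    rw [Ne, add_eq_zero_iff_eq_neg, ZModModule.neg_eq_self]
    exact fun h => haS (h ▸ hv)
  have hava : a ≠ a + v := fun h => hS.zero_notMem (by rwa [left_eq_add.mp h] at hv)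
  have havS' : a + v ∉ S.erase v := fun h => havS (mem_of_mem_erase h)
  have haS' : a ∉ insert (a + v) (S.erase v) := by
    simp only [mem_insert, mem_erase, not_or]
    exact ⟨hava, fun h => haS h.2⟩
  refine ⟨insert a (insert (a + v) (S.erase v)), ⟨?_, ?_⟩, ?_, ?_⟩
  · simp only [mem_insert, mem_erase, not_or]
    exact ⟨ha0.symm, hav0.symm, fun h => hS.zero_notMem h.2⟩
  · rw [sum_insert haS', sum_insert havS', ← hS.sum_eq_zero, ← add_sum_erase _ _ hv,
      ← add_assoc, ← add_assoc, ZModModule.add_self, zero_add]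
  · rw [card_insert_of_notMem haS', card_insert_of_notMem havS', card_erase_add_one hv]
  · refine Submodule.span_le.mpr fun x hx => ?_
    by_cases hxv : x = v
    · have hsplit := (Submodule.span (ZMod 2) _).add_mem
        (Submodule.subset_span (mem_insert_self a _))
        (Submodule.subset_span (mem_insert_of_mem (mem_insert_self (a + v) (S.erase v))))
      rw [hxv]
      rwa [← add_assoc, ZModModule.add_self, zero_add] at hsplit
    · exact Submodule.subset_span (by simp [hxv, Finset.mem_coe.mp hx])

theorem exists_card_eq (hS : IsEvenPointSet S) (hne : S.Nonempty) {m : ℕ} (hm : S.card ≤ m)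
    (hmV : 2 * m ≤ Fintype.card V) :
    ∃ T : Finset V, IsEvenPointSet T ∧ T.card = m ∧
      Submodule.span (ZMod 2) (S : Set V) ≤ Submodule.span (ZMod 2) (T : Set V) := by
  induction m, hm using Nat.le_induction with
  | base => exact ⟨S, hS, rfl, le_rfl⟩
  | succ m hm ih =>
    obtain ⟨T, hT, hTcard, hST⟩ := ih (by omega)
    obtain ⟨v, hv⟩ : T.Nonempty := card_pos.mp (by have := hne.card_pos; omega)
    obtain ⟨T', hT', hT'card, hTT'⟩ := hT.exists_card_succ hv (by omega)
    exact ⟨T', hT', hT'card.trans (by rw [hTcard]), hST.trans hTT'⟩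

theorem exists_card_three (hV : 4 ≤ Fintype.card V) :
    ∃ T : Finset V, IsEvenPointSet T ∧ T.card = 3 := by
  obtain ⟨x, -, hx0⟩ := exists_mem_notMem_of_card_lt_card (s := ({0} : Finset V)) (t := univ)
    (by rw [card_singleton, card_univ]; omega)
  obtain ⟨y, -, hy⟩ := exists_mem_notMem_of_card_lt_card (s := ({0, x} : Finset V)) (t := univ)
    (by grw [card_insert_le, card_singleton, card_univ]; omega)
  rw [mem_singleton] at hx0
  simp only [mem_insert, mem_singleton, not_or] at hy
  obtain ⟨hy0, hyx⟩ := hy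
  have hxy : x + y ≠ 0 := by
    rw [Ne, add_eq_zero_iff_eq_neg, ZModModule.neg_eq_self]
    exact fun h => hyx h.symm
  have hx : x ∉ ({y, x + y} : Finset V) := by
    simpa [not_or, eq_comm (a := x), hy0] using Ne.symm hyx
  have hy : y ∉ ({x + y} : Finset V) := by
    simpa [eq_comm (a := y)] using hx0
  refine ⟨{x, y, x + y}, ⟨?_, ?_⟩, ?_⟩
  · simp only [mem_insert, mem_singleton, not_or]
    exact ⟨Ne.symm hx0, Ne.symm hy0, hxy.symm⟩
  · rw [sum_insert hx, sum_insert hy, sum_singleton, ← add_assoc, ZModModule.add_self]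
  · rw [card_insert_of_notMem hx, card_insert_of_notMem hy, card_singleton]

end IsEvenPointSet

theorem exists_evenPointSet_card_eq {V : Type*} [AddCommGroup V] [Module (ZMod 2) V] [Fintype V]
    [DecidableEq V] (hV : 4 ≤ Fintype.card V) {m : ℕ} (hm : m = 0 ∨ 3 ≤ m)
    (hmV : 2 * m ≤ Fintype.card V) : ∃ T : Finset V, IsEvenPointSet T ∧ T.card = m := by
  rcases hm with rfl | hm
  · exact ⟨∅, ⟨notMem_empty 0, sum_empty⟩, card_empty⟩
  obtain ⟨T₀, hT₀, hT₀card⟩ := IsEvenPointSet.exists_card_three hV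
  obtain ⟨T, hT, hTcard, -⟩ :=
    hT₀.exists_card_eq (card_pos.mp (by omega)) (hT₀card ▸ hm) hmV
  exact ⟨T, hT, hTcard⟩

theorem exists_spanning_evenPointSet_card_eq_card_add_one {ι : Type*} [Fintype ι] [DecidableEq ι]
    (hι : 2 ≤ Fintype.card ι) :
    ∃ S : Finset (ι → ZMod 2), IsEvenPointSet S ∧ S.card = Fintype.card ι + 1 ∧
      Submodule.span (ZMod 2) (S : Set (ι → ZMod 2)) = ⊤ := by
  set e := Pi.basisFun (ZMod 2) ι
  have hone : (1 : ι → ZMod 2) ∉ univ.image e := by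
    simp only [mem_image, mem_univ, true_and, not_exists]
    intro i h
    obtain ⟨j, hji⟩ := Fintype.exists_ne_of_one_lt_card hι i
    simpa [e, hji] using congrFun h j
  refine ⟨insert 1 (univ.image e), ⟨?_, ?_⟩, ?_, ?_⟩
  · have : Nonempty ι := Fintype.card_pos_iff.mp (by omega)
    simp [e, eq_comm (a := (0 : ι → ZMod 2))]
  · rw [sum_insert hone, sum_image fun i _ j _ h => e.injective h]
    simp only [e, Pi.basisFun_apply, univ_sum_single]
    exact ZModModule.add_self _
  · rw [card_insert_of_notMem hone, card_image_of_injective _ e.injective, card_univ]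
  · refine eq_top_iff.mpr (e.span_eq.symm.le.trans (Submodule.span_mono ?_))
    rintro _ ⟨i, rfl⟩
    simp

theorem exists_spanning_evenPointSet {k n : ℕ} (h1 : k + 1 ≤ n) (h2 : n ≤ 2 ^ k - 1)
    (h3 : n ≠ 2 ^ k - 3) (h4 : n ≠ 2 ^ k - 2) :
    ∃ S : Finset (Fin k → ZMod 2), IsEvenPointSet S ∧
      Submodule.span (ZMod 2) (S : Set (Fin k → ZMod 2)) = ⊤ ∧ S.card = n := by
  have hk : 2 ≤ k := by
    by_contra! hk
    interval_cases k <;> omega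
  have hcard : Fintype.card (Fin k → ZMod 2) = 2 ^ k := by simp
  have hfinrank : finrank (ZMod 2) (Fin k → ZMod 2) = k := by simp
  have h4k : 4 ≤ 2 ^ k := by
    calc 4 = 2 ^ 2 := by norm_num
      _ ≤ 2 ^ k := Nat.pow_le_pow_right (by norm_num) hk
  rcases le_or_gt (2 * n) (2 ^ k) with hsmall | hlarge
  · obtain ⟨S₀, hS₀, hS₀card, hS₀span⟩ :=
      exists_spanning_evenPointSet_card_eq_card_add_one (ι := Fin k) (by simpa using hk)
    obtain ⟨S, hS, hScard, hspan⟩ :=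
      hS₀.exists_card_eq (card_pos.mp (by omega)) (m := n) (by simpa [hS₀card] using h1)
        (hcard ▸ hsmall)
    exact ⟨S, hS, eq_top_iff.mpr (hS₀span ▸ hspan), hScard⟩
  · obtain ⟨T, hT, hTcard⟩ := exists_evenPointSet_card_eq (V := Fin k → ZMod 2)
      (hcard ▸ h4k) (m := 2 ^ k - 1 - n) (by omega) (by omega)
    have hcompl := hT.card_compl_insert_zero
    rw [hTcard, hcard] at hcompl
    exact ⟨_, hT.compl (by rwa [hfinrank]), span_eq_top_of_card_lt _ (by omega), by omega⟩

section PointCode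

variable (K : Type*) {V ι : Type*} [Field K] [AddCommGroup V] [Module K V]

/-- The code whose generator matrix has the columns `p i`: its words are `(f (p i))ᵢ` for the
functionals `f` on `V`. -/
def pointCode (p : ι → V) : Submodule K (ι → K) :=
  LinearMap.range (LinearMap.pi fun i => Dual.eval K V (p i))

variable {K} {p : ι → V}

theorem mem_pointCode {c : ι → K} :
    c ∈ pointCode K p ↔ ∃ f : Dual K V, ∀ i, f (p i) = c i := by
  simp [pointCode, funext_iff]

theorem finrank_pointCode [FiniteDimensional K V] (hp : Submodule.span K (Set.range p) = ⊤) :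
    finrank K (pointCode K p) = finrank K V := by
  rw [pointCode, LinearMap.finrank_range_of_inj, Subspace.dual_finrank_eq]
  intro f g hfg
  exact LinearMap.ext_on_range hp fun i => congrFun hfg i

theorem exists_mem_pointCode_apply_ne_zero {i : ι} (hi : p i ≠ 0) :
    ∃ c ∈ pointCode K p, c i ≠ 0 := by
  obtain ⟨f, hf⟩ := Projective.exists_dual_ne_zero K hi
  exact ⟨fun j => f (p j), mem_pointCode.mpr ⟨f, fun _ => rfl⟩, hf⟩

theorem exists_mem_pointCode_apply_ne {i j : ι} (hij : p i ≠ p j) :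
    ∃ c ∈ pointCode K p, c i ≠ c j := by
  obtain ⟨f, hf⟩ := Projective.exists_dual_ne_zero K (sub_ne_zero.mpr hij)
  exact ⟨fun l => f (p l), mem_pointCode.mpr ⟨f, fun _ => rfl⟩,
    sub_ne_zero.mp (by simpa using hf)⟩

theorem sum_eq_zero_of_mem_pointCode [Fintype ι] (hp : ∑ i, p i = 0) {c : ι → K}
    (hc : c ∈ pointCode K p) : ∑ i, c i = 0 := by
  obtain ⟨f, hf⟩ := mem_pointCode.mp hc
  simp only [← hf, ← map_sum, hp, map_zero]

end PointCode

theorem exists_code_of_spanning_evenPointSet {V : Type*} [AddCommGroup V] [Module (ZMod 2) V]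
    [FiniteDimensional (ZMod 2) V] {S : Finset V} (hS : IsEvenPointSet S)
    (hspan : Submodule.span (ZMod 2) (S : Set V) = ⊤) :
    ∃ C : Submodule (ZMod 2) (Fin S.card → ZMod 2),
      finrank (ZMod 2) C = finrank (ZMod 2) V ∧ (∀ c ∈ C, ∑ i, c i = 0) ∧
      (∀ i, ∃ c ∈ C, c i ≠ 0) ∧ (∀ i j, i ≠ j → ∃ c ∈ C, c i ≠ c j) := by
  set p : Fin S.card → V := fun i => S.equivFin.symm i
  have hp_mem : ∀ i, p i ∈ S := fun i => (S.equivFin.symm i).2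
  have hp_inj : Function.Injective p := Subtype.coe_injective.comp S.equivFin.symm.injective
  have hp_range : Set.range p = S := by
    ext x
    exact ⟨fun ⟨i, hi⟩ => hi ▸ hp_mem i,
      fun hx => ⟨S.equivFin ⟨x, hx⟩, by simp [p]⟩⟩
  have hp_sum : ∑ i, p i = 0 := by
    rw [← hS.sum_eq_zero, ← sum_coe_sort S]
    exact Equiv.sum_comp S.equivFin.symm (fun x : S => (x : V))
  refine ⟨pointCode (ZMod 2) p, finrank_pointCode (hp_range ▸ hspan),
    fun c hc => sum_eq_zero_of_mem_pointCode hp_sum hc,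
    fun i => exists_mem_pointCode_apply_ne_zero fun h => hS.zero_notMem (h ▸ hp_mem i),
    fun i j hij => exists_mem_pointCode_apply_ne (hp_inj.ne hij)⟩

section CodeCoordinates

variable {K ι : Type*} [Field K] (C : Submodule K (ι → K))

/-- The `i`-th column of a generator matrix of `C`, read as a point of the dual of `C`. -/
def coordFunctional (i : ι) : Dual K C :=
  (LinearMap.proj i).comp C.subtype

@[simp]
theorem coordFunctional_apply (i : ι) (c : C) : coordFunctional C i c = (c : ι → K) i :=
  rfl

variable {C}

theorem coordFunctional_injective (hsep : ∀ i j, i ≠ j → ∃ c ∈ C, c i ≠ c j) :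
    Function.Injective (coordFunctional C) := by
  intro i j hij
  by_contra hne
  obtain ⟨c, hc, hcij⟩ := hsep i j hne
  exact hcij (LinearMap.congr_fun hij ⟨c, hc⟩)

theorem coordFunctional_ne_zero {i : ι} (hi : ∃ c ∈ C, c i ≠ 0) :
    coordFunctional C i ≠ 0 := by
  obtain ⟨c, hc, hci⟩ := hi
  exact fun h => hci (LinearMap.congr_fun h ⟨c, hc⟩)

variable [Fintype ι]

theorem sum_coordFunctional (hC : ∀ c ∈ C, ∑ i, c i = 0) :
    ∑ i, coordFunctional C i = 0 := by
  ext c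
  simpa using hC c c.2

theorem finrank_lt_card_of_sum_eq_zero (hC : ∀ c ∈ C, ∑ i, c i = 0) [Nonempty ι] :
    finrank K C < Fintype.card ι := by
  classical
  obtain ⟨i⟩ := ‹Nonempty ι›
  have hsingle : Pi.single i 1 ∉ C := fun h => by simpa using hC _ h
  have hC_ne : C ≠ ⊤ := fun h => hsingle (h ▸ Submodule.mem_top)
  simpa using Submodule.finrank_lt hC_ne

end CodeCoordinates

theorem card_bounds_of_even_projective_code {ι : Type*} [Fintype ι] [Nonempty ι]
    {C : Submodule (ZMod 2) (ι → ZMod 2)} {k : ℕ} (hk : finrank (ZMod 2) C = k)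
    (hC : ∀ c ∈ C, ∑ i, c i = 0) (hnz : ∀ i, ∃ c ∈ C, c i ≠ 0)
    (hsep : ∀ i j, i ≠ j → ∃ c ∈ C, c i ≠ c j) :
    k + 1 ≤ Fintype.card ι ∧ Fintype.card ι ≤ 2 ^ k - 1 ∧
      Fintype.card ι ≠ 2 ^ k - 3 ∧ Fintype.card ι ≠ 2 ^ k - 2 := by
  classical
  have hk1 := hk ▸ finrank_lt_card_of_sum_eq_zero hC
  have : Finite (Dual (ZMod 2) C) := Module.finite_of_finite (ZMod 2)
  let : Fintype (Dual (ZMod 2) C) := Fintype.ofFinite _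
  have hfinrank : finrank (ZMod 2) (Dual (ZMod 2) C) = k := by rw [Subspace.dual_finrank_eq, hk]
  have hcard : Fintype.card (Dual (ZMod 2) C) = 2 ^ k := by
    rw [card_eq_pow_finrank (K := ZMod 2), ZMod.card, hfinrank]
  have hS : IsEvenPointSet (univ.image (coordFunctional C)) :=
    ⟨by simp [coordFunctional_ne_zero (hnz _)], by
      rw [sum_image fun i _ j _ h => coordFunctional_injective hsep h, sum_coordFunctional hC]⟩
  have hScard : (univ.image (coordFunctional C)).card = Fintype.card ι := by
    rw [card_image_of_injective _ (coordFunctional_injective hsep), card_univ]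
  have hlt := hScard ▸ hcard ▸ hS.card_lt
  have hk2 : 2 ≤ k := by
    by_contra! hk2
    interval_cases k <;> omega
  have h3 := hScard ▸ hcard ▸ hS.card_add_three_ne (hfinrank ▸ hk2)
  have h2 := hScard ▸ hcard ▸ hS.card_add_two_ne (hfinrank ▸ hk2)
  omega

theorem projective_two_divisible_iff_general {n k : ℕ} (hn : 0 < n) :
    (∃ C : Submodule (ZMod 2) (Fin n → ZMod 2),
        Module.finrank (ZMod 2) C = k ∧
        (∀ c ∈ C, Even (hammingNorm c)) ∧
        (∀ i : Fin n, ∃ c ∈ C, c i ≠ 0) ∧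
        (∀ i j : Fin n, i ≠ j → ∃ c ∈ C, c i ≠ c j)) ↔
      (k + 1 ≤ n ∧ n ≤ 2 ^ k - 1 ∧ n ≠ 2 ^ k - 3 ∧ n ≠ 2 ^ k - 2) := by
  simp_rw [even_hammingNorm_iff_sum_eq_zero]
  constructor
  · rintro ⟨C, hk, hC, hnz, hsep⟩
    have : Nonempty (Fin n) := ⟨⟨0, hn⟩⟩
    simpa using card_bounds_of_even_projective_code hk hC hnz hsep
  · rintro ⟨h1, h2, h3, h4⟩
    obtain ⟨S, hS, hspan, rfl⟩ := exists_spanning_evenPointSet h1 h2 h3 h4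
    simpa using exists_code_of_spanning_evenPointSet hS hspan

/-- A projective 2-divisible binary linear [n,k] code exists if and only if
k+1 ≤ n ≤ 2^k − 1 and n ∉ {2^k − 3, 2^k − 2}. -/
theorem projective_two_divisible_iff {n k : ℕ} (hn : 0 < n) (hk : 0 < k) :
    (∃ C : Submodule (ZMod 2) (Fin n → ZMod 2),
        Module.finrank (ZMod 2) C = k ∧
        (∀ c ∈ C, Even (hammingNorm c)) ∧
        (∀ i : Fin n, ∃ c ∈ C, c i ≠ 0) ∧
        (∀ i j : Fin n, i ≠ j → ∃ c ∈ C, c i ≠ c j)) ↔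
      (k + 1 ≤ n ∧ n ≤ 2 ^ k - 1 ∧ n ≠ 2 ^ k - 3 ∧ n ≠ 2 ^ k - 2) :=
  projective_two_divisible_iff_general hn
end

section
/- Let K be a set of points of PG(k−1, F_2) that is 2-divisible (every hyperplane misses an even number of points of K). If K has no tangent line (no line of PG(k−1, F_2) meets K in exactly one point), then the complement of K in the point set of PG(k−1, F_2) is a subspace, and hence |K| ≥ 2^(k−1). -/
/-!
If two nonzero vectors `u ≠ v` lie outside `K`, the line `{u, v, u + v}` would be a tangent
unless `u + v` lies outside `K` as well. Hence the complement of `K` (which contains `0`) is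
closed under addition, i.e. a subspace over `𝔽₂`. Since `K` is nonempty the subspace is proper,
so it contains at most half of the `2 ^ k` vectors, and `K` contains the rest.
-/

section NoTangent

variable {V : Type*} [AddCommGroup V] [Module (ZMod 2) V] {K : Set V}

theorem add_notMem_of_no_tangent (h0 : (0 : V) ∉ K)
    (htan : ∀ u v : V, u ≠ 0 → v ≠ 0 → u ≠ v → ({u, v, u + v} ∩ K).ncard ≠ 1)
    {u v : V} (hu : u ∉ K) (hv : v ∉ K) : u + v ∉ K := by
  intro huv
  obtain rfl | hu0 := eq_or_ne u 0
  · exact hv (by rwa [zero_add] at huv)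
  obtain rfl | hv0 := eq_or_ne v 0
  · exact hu (by rwa [add_zero] at huv)
  obtain rfl | huv0 := eq_or_ne u v
  · exact h0 (by rwa [ZModModule.add_self] at huv)
  refine htan u v hu0 hv0 huv0 ?_
  have hline : ({u, v, u + v} ∩ K : Set V) = {u + v} := by
    ext x
    constructor
    · rintro ⟨rfl | rfl | rfl, hx⟩
      exacts [absurd hx hu, absurd hx hv, rfl]
    · rintro rfl
      exact ⟨by simp, huv⟩
  rw [hline, Set.ncard_singleton]

def noTangentComplSubmodule (h0 : (0 : V) ∉ K)
    (htan : ∀ u v : V, u ≠ 0 → v ≠ 0 → u ≠ v → ({u, v, u + v} ∩ K).ncard ≠ 1) :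
    Submodule (ZMod 2) V where
  carrier := Kᶜ
  zero_mem' := h0
  add_mem' := add_notMem_of_no_tangent h0 htan
  smul_mem' c x hx := by
    obtain rfl | rfl : c = 0 ∨ c = 1 := by revert c; decide
    · rwa [zero_smul]
    · rwa [one_smul]

end NoTangent

theorem AddSubgroup.two_mul_card_le_of_ne_top {G : Type*} [AddGroup G] [Finite G]
    {H : AddSubgroup G} (hH : H ≠ ⊤) : 2 * Nat.card H ≤ Nat.card G := by
  rw [← H.card_mul_index, mul_comm]
  exact Nat.mul_le_mul_left _ (H.one_lt_index_of_ne_top hH)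

theorem no_tangent_complement_subspace_general {k : ℕ}
    (K : Set (Fin k → ZMod 2)) (h0 : ∀ x ∈ K, x ≠ 0) (hne : K.Nonempty)
    (htan : ∀ u v : Fin k → ZMod 2, u ≠ 0 → v ≠ 0 → u ≠ v →
      ({u, v, u + v} ∩ K).ncard ≠ 1) :
    (∃ W : Submodule (ZMod 2) (Fin k → ZMod 2),
        {x : Fin k → ZMod 2 | x ≠ 0 ∧ x ∉ K} = {x | x ∈ W ∧ x ≠ 0}) ∧
      2 ^ (k - 1) ≤ K.ncard := by
  have h0' : (0 : Fin k → ZMod 2) ∉ K := fun h => h0 0 h rfl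
  set W := noTangentComplSubmodule h0' htan
  refine ⟨⟨W, Set.ext fun x => and_comm⟩, ?_⟩
  have hW : W.toAddSubgroup ≠ ⊤ := by
    obtain ⟨x, hx⟩ := hne
    exact fun h => (show x ∈ W from (AddSubgroup.eq_top_iff' _).1 h x) hx
  have hhalf : 2 * Kᶜ.ncard ≤ 2 ^ k := by
    have hcard : Nat.card W = Kᶜ.ncard := Nat.card_coe_set_eq Kᶜ
    simpa [hcard, Nat.card_eq_fintype_card] using AddSubgroup.two_mul_card_le_of_ne_top hW
  have hsum : K.ncard + Kᶜ.ncard = 2 ^ k := by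
    simpa [Nat.card_eq_fintype_card] using Set.ncard_add_ncard_compl K
  have hpos : 0 < K.ncard := hne.ncard_pos K.toFinite
  cases k with
  | zero => simp only [zero_tsub, pow_zero]; omega
  | succ k => rw [pow_succ] at hhalf hsum; simp only [Nat.add_sub_cancel]; omega

/-- A nonempty 2-divisible point set in PG(k−1, F_2) without a tangent line has
a complement which is (the set of nonzero points of) a subspace; hence it has at
least 2^(k−1) points. -/
theorem no_tangent_complement_subspace {k : ℕ}
    (K : Set (Fin k → ZMod 2)) (h0 : ∀ x ∈ K, x ≠ 0) (hne : K.Nonempty)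
    (hdiv : ∀ a : Fin k → ZMod 2, a ≠ 0 →
      Even {x ∈ K | ∑ i, a i * x i ≠ 0}.ncard)
    (htan : ∀ u v : Fin k → ZMod 2, u ≠ 0 → v ≠ 0 → u ≠ v →
      ({u, v, u + v} ∩ K).ncard ≠ 1) :
    (∃ W : Submodule (ZMod 2) (Fin k → ZMod 2),
        {x : Fin k → ZMod 2 | x ≠ 0 ∧ x ∉ K} = {x | x ∈ W ∧ x ≠ 0}) ∧
      2 ^ (k - 1) ≤ K.ncard :=
  no_tangent_complement_subspace_general K h0 hne htan
end
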